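/- arXiv:2308.14815 — 2 statements merged into one kernel-verified Lean document; each statement's English description precedes it below -/
import Mathlib

section
/- Let P be a probability measure on ℝ, let a ≤ b be real numbers, let β > 0 and λ > 0. If ∫ max(y − b, 0) dP(y) ≤ β / 2 and ∫ max(a − y, 0) dP(y) ≤ β / 2, then P({y : a − λβ ≤ y ≤ b + λβ}) ≥ 1 − 1/λ. -/
open MeasureTheory
open scoped ENNReal

lemma tail_bound (P : Measure ℝ) [IsProbabilityMeasure P] (β lam : ℝ)
    (hβ : 0 < β) (hlam : 0 < lam) (f : ℝ → ℝ) (hf : Measurable f)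
    (h : ∫⁻ y, ENNReal.ofReal (f y) ∂P ≤ ENNReal.ofReal (β / 2)) :
    P {y | lam * β ≤ f y} ≤ ENNReal.ofReal (1 / (2 * lam)) := by
  have hεpos : 0 < lam * β := mul_pos hlam hβ
  have hmarkov := mul_meas_ge_le_lintegral₀ (μ := P)
    (f := fun y => ENNReal.ofReal (f y))
    ((ENNReal.measurable_ofReal.comp hf).aemeasurable) (ENNReal.ofReal (lam * β))
  have hsub : {y | lam * β ≤ f y} ⊆ {y | ENNReal.ofReal (lam * β) ≤ ENNReal.ofReal (f y)} :=
    fun y hy => ENNReal.ofReal_le_ofReal hy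
  have h1 : ENNReal.ofReal (lam * β) * P {y | lam * β ≤ f y} ≤ ENNReal.ofReal (β / 2) :=
    le_trans (le_trans (mul_le_mul_right (measure_mono hsub) _) hmarkov) h
  have hne : ENNReal.ofReal (lam * β) ≠ 0 := by
    simp [ENNReal.ofReal_eq_zero, not_le, hεpos]
  have heq : ENNReal.ofReal (lam * β) * ENNReal.ofReal (1 / (2 * lam))
      = ENNReal.ofReal (β / 2) := by
    rw [← ENNReal.ofReal_mul hεpos.le]
    congr 1
    field_simp
  exact (ENNReal.mul_le_mul_iff_right hne ENNReal.ofReal_ne_top).mp (h1.trans heq.ge)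

/-- two-sided coverage estimate. If the expected excess of `P`
above `b` and below `a` are each at most `β/2`, then the inflated interval
`[a - λβ, b + λβ]` has probability at least `1 - 1/λ`. -/
theorem coverage_of_expected_excess
    (P : Measure ℝ) [IsProbabilityMeasure P]
    (a b β lam : ℝ) (hab : a ≤ b) (hβ : 0 < β) (hlam : 0 < lam)
    (hupper : ∫⁻ y, ENNReal.ofReal (max (y - b) 0) ∂P ≤ ENNReal.ofReal (β / 2))
    (hlower : ∫⁻ y, ENNReal.ofReal (max (a - y) 0) ∂P ≤ ENNReal.ofReal (β / 2)) :
    ENNReal.ofReal (1 - 1 / lam) ≤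
      P {y | a - lam * β ≤ y ∧ y ≤ b + lam * β} := by
  have hup : P {y : ℝ | lam * β ≤ max (y - b) 0} ≤ ENNReal.ofReal (1 / (2 * lam)) :=
    tail_bound P β lam hβ hlam _ ((measurable_id.sub measurable_const).max measurable_const)
      hupper
  have hlo : P {y : ℝ | lam * β ≤ max (a - y) 0} ≤ ENNReal.ofReal (1 / (2 * lam)) :=
    tail_bound P β lam hβ hlam _ ((measurable_const.sub measurable_id).max measurable_const)
      hlower
  set S : Set ℝ := {y | a - lam * β ≤ y ∧ y ≤ b + lam * β} with hS
  have hSm : MeasurableSet S := by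
    have : S = Set.Icc (a - lam * β) (b + lam * β) := rfl
    rw [this]; exact measurableSet_Icc
  have hcompl : Sᶜ ⊆ {y : ℝ | lam * β ≤ max (y - b) 0} ∪ {y : ℝ | lam * β ≤ max (a - y) 0} := by
    intro y hy
    simp only [hS, Set.mem_compl_iff, Set.mem_setOf_eq, not_and_or, not_le] at hy
    rcases hy with h | h
    · right; simp only [Set.mem_setOf_eq, le_max_iff]; left; linarith
    · left; simp only [Set.mem_setOf_eq, le_max_iff]; left; linarith
  have hcb : P Sᶜ ≤ ENNReal.ofReal (1 / lam) := by
    calc P Sᶜ ≤ P ({y : ℝ | lam * β ≤ max (y - b) 0} ∪ {y : ℝ | lam * β ≤ max (a - y) 0}) :=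
          measure_mono hcompl
      _ ≤ P {y : ℝ | lam * β ≤ max (y - b) 0} + P {y : ℝ | lam * β ≤ max (a - y) 0} :=
          measure_union_le _ _
      _ ≤ ENNReal.ofReal (1 / (2 * lam)) + ENNReal.ofReal (1 / (2 * lam)) :=
          add_le_add hup hlo
      _ = ENNReal.ofReal (1 / lam) := by
          rw [← ENNReal.ofReal_add (by positivity) (by positivity)]
          congr 1
          rw [← add_div]
          rw [show (1:ℝ)+1 = 2 by norm_num]
          rw [mul_comm]
          field_simp
  have h1 : ENNReal.ofReal (1 - 1 / lam) = 1 - ENNReal.ofReal (1 / lam) := by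
    rw [ENNReal.ofReal_sub _ (by positivity), ENNReal.ofReal_one]
  rw [h1, tsub_le_iff_right]
  calc (1 : ℝ≥0∞) = P S + P Sᶜ := by
        rw [measure_add_measure_compl hSm, measure_univ]
    _ ≤ P S + ENNReal.ofReal (1 / lam) := add_le_add_right hcb _
end

section
/- (Theorem 1, integrated form) Let X and Y = ℝ be measurable spaces, let κ be a Markov kernel from X to ℝ (the conditional distribution of Y given X), let Φ̲, Φ̄ : X → ℝ be measurable with Φ̲ ≤ Φ̄, and let β > 0, λ > 0. Let 𝒫_X be a nonempty set of probability measures on X. Suppose that for every x ∈ X, ∫ max(y − Φ̄(x), 0) dκ(x)(y) ≤ β/2 and ∫ max(Φ̲(x) − y, 0) dκ(x)(y) ≤ β/2. Then inf over P_X ∈ 𝒫_X of ∫_X κ(x)({y : Φ̲(x) − λβ ≤ y ≤ Φ̄(x) + λβ}) dP_X(x) ≥ 1 − 1/λ. In particular, the same bound ∫_X κ(x)({Φ̲(x) − λβ ≤ y ≤ Φ̄(x) + λβ}) dP_X(dx) ≥ 1 − 1/λ holds for every individual P_X ∈ 𝒫_X. -/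
open MeasureTheory ProbabilityTheory
open scoped ENNReal

lemma tail_bound_s8 (μ : Measure ℝ) [IsProbabilityMeasure μ] (f : ℝ → ℝ)
    (hf : Measurable f) (t c : ℝ) (ht : 0 < t)
    (hint : ∫⁻ y, ENNReal.ofReal (max (f y) 0) ∂μ ≤ ENNReal.ofReal c)
    (A : Set ℝ) (hA : ∀ y ∈ A, t ≤ f y) :
    μ A ≤ ENNReal.ofReal (c / t) := by
  have hsub : A ⊆ {y | ENNReal.ofReal t ≤ ENNReal.ofReal (max (f y) 0)} := by
    intro y hy
    exact ENNReal.ofReal_le_ofReal (le_max_of_le_left (hA y hy))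
  have hmarkov := mul_meas_ge_le_lintegral₀
    (μ := μ) (f := fun y => ENNReal.ofReal (max (f y) 0))
    ((hf.max measurable_const).ennreal_ofReal.aemeasurable) (ENNReal.ofReal t)
  have h1 : ENNReal.ofReal t * μ A ≤ ENNReal.ofReal c := by
    calc ENNReal.ofReal t * μ A
        ≤ ENNReal.ofReal t * μ {y | ENNReal.ofReal t ≤ ENNReal.ofReal (max (f y) 0)} :=
          mul_le_mul_right (measure_mono hsub) _
      _ ≤ _ := hmarkov.trans hint
  have ht' : ENNReal.ofReal t ≠ 0 := by simp [ENNReal.ofReal_eq_zero, not_le, ht]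
  rw [ENNReal.ofReal_div_of_pos ht]
  rw [ENNReal.le_div_iff_mul_le (Or.inl ht') (Or.inl ENNReal.ofReal_ne_top)]
  rwa [mul_comm]

lemma pointwise_cov (μ : Measure ℝ) [IsProbabilityMeasure μ] (a b β lam : ℝ)
    (hβ : 0 < β) (hlam : 0 < lam)
    (hu : ∫⁻ y, ENNReal.ofReal (max (y - b) 0) ∂μ ≤ ENNReal.ofReal (β / 2))
    (hl : ∫⁻ y, ENNReal.ofReal (max (a - y) 0) ∂μ ≤ ENNReal.ofReal (β / 2)) :
    ENNReal.ofReal (1 - 1 / lam) ≤ μ {y | a - lam * β ≤ y ∧ y ≤ b + lam * β} := by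
  have htβ : 0 < lam * β := mul_pos hlam hβ
  have hA : μ {y | b + lam * β < y} ≤ ENNReal.ofReal (β / 2 / (lam * β)) :=
    tail_bound_s8 μ (fun y => y - b) (measurable_id.sub_const b) _ _ htβ hu _
      (fun y hy => by simp only [Set.mem_setOf_eq] at hy; show lam * β ≤ y - b; linarith)
  have hB : μ {y | y < a - lam * β} ≤ ENNReal.ofReal (β / 2 / (lam * β)) :=
    tail_bound_s8 μ (fun y => a - y) (measurable_const.sub measurable_id) _ _ htβ hl _
      (fun y hy => by simp only [Set.mem_setOf_eq] at hy; show lam * β ≤ a - y; linarith)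
  have hval : β / 2 / (lam * β) = 1 / (2 * lam) := by field_simp
  have hS : {y | a - lam * β ≤ y ∧ y ≤ b + lam * β} = Set.Icc (a - lam * β) (b + lam * β) := rfl
  have hcompl : (Set.Icc (a - lam * β) (b + lam * β))ᶜ ⊆
      {y | y < a - lam * β} ∪ {y | b + lam * β < y} := by
    intro y hy
    simp only [Set.mem_compl_iff, Set.mem_Icc, not_and_or, not_le] at hy
    simpa using hy
  have hcb : μ (Set.Icc (a - lam * β) (b + lam * β))ᶜ ≤ ENNReal.ofReal (1 / lam) := by
    calc μ (Set.Icc (a - lam * β) (b + lam * β))ᶜ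
        ≤ μ ({y | y < a - lam * β} ∪ {y | b + lam * β < y}) := measure_mono hcompl
      _ ≤ μ {y | y < a - lam * β} + μ {y | b + lam * β < y} := measure_union_le _ _
      _ ≤ ENNReal.ofReal (β / 2 / (lam * β)) + ENNReal.ofReal (β / 2 / (lam * β)) :=
          add_le_add hB hA
      _ = ENNReal.ofReal (1 / (2 * lam) + 1 / (2 * lam)) := by
          rw [hval, ENNReal.ofReal_add] <;> positivity
      _ = ENNReal.ofReal (1 / lam) := by congr 1; field_simp; norm_num
  have hadd := measure_add_measure_compl (μ := μ)
    (measurableSet_Icc (a := a - lam * β) (b := b + lam * β))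
  rw [measure_univ] at hadd
  rw [hS]
  have : ENNReal.ofReal (1 - 1 / lam) ≤ 1 - ENNReal.ofReal (1 / lam) := by
    rw [ENNReal.ofReal_sub _ (by positivity)]
    simp
  refine this.trans ?_
  rw [tsub_le_iff_right, ← hadd]
  exact add_le_add_right hcb _

/-- Theorem 1, integrated form: if for every `x` the conditional
law `κ x` of `Y` given `X = x` satisfies the expected-excess bounds from the
first-order optimality conditions of the interval loss, then the lower
expectation (over the credal set `𝓟X`) of the conditional coverage probability
of the `λβ`-inflated interval `[Φ̲ x - λβ, Φ̄ x + λβ]` is at least `1 - 1/λ`;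
in particular the same bound holds for every individual `P_X ∈ 𝓟X`. -/
theorem interval_network_coverage {X : Type*} [MeasurableSpace X]
    (κ : Kernel X ℝ) [IsMarkovKernel κ]
    (Φl Φu : X → ℝ) (hΦl : Measurable Φl) (hΦu : Measurable Φu)
    (hle : ∀ x, Φl x ≤ Φu x)
    (β lam : ℝ) (hβ : 0 < β) (hlam : 0 < lam)
    (𝓟X : Set (Measure X)) (h𝓟X : 𝓟X.Nonempty)
    (hprob : ∀ P ∈ 𝓟X, IsProbabilityMeasure P)
    (hupper : ∀ x, ∫⁻ y, ENNReal.ofReal (max (y - Φu x) 0) ∂(κ x) ≤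
      ENNReal.ofReal (β / 2))
    (hlower : ∀ x, ∫⁻ y, ENNReal.ofReal (max (Φl x - y) 0) ∂(κ x) ≤
      ENNReal.ofReal (β / 2)) :
    ENNReal.ofReal (1 - 1 / lam) ≤
      (⨅ PX ∈ 𝓟X, ∫⁻ x, κ x {y | Φl x - lam * β ≤ y ∧ y ≤ Φu x + lam * β} ∂PX) ∧
    ∀ PX ∈ 𝓟X, ENNReal.ofReal (1 - 1 / lam) ≤
      ∫⁻ x, κ x {y | Φl x - lam * β ≤ y ∧ y ≤ Φu x + lam * β} ∂PX := by
  have key : ∀ PX ∈ 𝓟X, ENNReal.ofReal (1 - 1 / lam) ≤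
      ∫⁻ x, κ x {y | Φl x - lam * β ≤ y ∧ y ≤ Φu x + lam * β} ∂PX := by
    intro PX hPX
    have : IsProbabilityMeasure PX := hprob PX hPX
    calc ENNReal.ofReal (1 - 1 / lam)
        = ∫⁻ _, ENNReal.ofReal (1 - 1 / lam) ∂PX := by simp [lintegral_const]
      _ ≤ ∫⁻ x, κ x {y | Φl x - lam * β ≤ y ∧ y ≤ Φu x + lam * β} ∂PX :=
          lintegral_mono fun x =>
            pointwise_cov (κ x) (Φl x) (Φu x) β lam hβ hlam (hupper x) (hlower x)
  exact ⟨le_iInf₂ key, key⟩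
end
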